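/- arXiv:2405.05249 — 5 statements merged into one kernel-verified Lean document; each statement's English description precedes it below -/
import Mathlib

section
/- Let α = 2/√3 − 1. For all real numbers λ₁, λ₂ with 0 ≤ λ₁ ≤ 2 and 0 ≤ λ₂ ≤ 2, one has α·(λ₁² + λ₂² − 1)/2 + (1 − α)·((λ₁ − 1)² + (λ₂ − 1)²)/4 ≥ 7/2 − 2√3. -/
/-! The weighted sum is a quadratic in `λ₁, λ₂` with leading coefficient `(1 + α)/4 = 1/(2√3)` in
each variable; completing the square gives
`((λ₁ - (√3 - 1))² + (λ₂ - (√3 - 1))²) / (2√3) + 7/2 - 2√3`,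
so the bound holds for all real `λ₁, λ₂`, with equality at `λ₁ = λ₂ = √3 - 1`. -/

open Real

lemma weighted_sum_eq_sq_add (l1 l2 : ℝ) :
    (2 / √3 - 1) * ((l1 ^ 2 + l2 ^ 2 - 1) / 2)
      + (1 - (2 / √3 - 1)) * (((l1 - 1) ^ 2 + (l2 - 1) ^ 2) / 4)
      = ((l1 - (√3 - 1)) ^ 2 + (l2 - (√3 - 1)) ^ 2) / (2 * √3) + (7 / 2 - 2 * √3) := by
  have hs : √3 ≠ 0 := by positivity
  have hs2 : √3 ^ 2 = 3 := sq_sqrt (by norm_num)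
  field_simp
  linear_combination 8 * hs2

theorem stmt_0_general (l1 l2 : ℝ) :
    (2 / Real.sqrt 3 - 1) * ((l1 ^ 2 + l2 ^ 2 - 1) / 2)
      + (1 - (2 / Real.sqrt 3 - 1)) * (((l1 - 1) ^ 2 + (l2 - 1) ^ 2) / 4)
      ≥ 7 / 2 - 2 * Real.sqrt 3 := by
  rw [weighted_sum_eq_sq_add, ge_iff_le, le_add_iff_nonneg_left]
  positivity

/-- Key elementary optimization: with `α = 2/√3 − 1`, for all `λ₁, λ₂ ∈ [0,2]`,
`α·(λ₁² + λ₂² − 1)/2 + (1 − α)·((λ₁ − 1)² + (λ₂ − 1)²)/4 ≥ 7/2 − 2√3`. -/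
theorem stmt_0 (l1 l2 : ℝ) (h1 : 0 ≤ l1) (h1' : l1 ≤ 2) (h2 : 0 ≤ l2) (h2' : l2 ≤ 2) :
    (2 / Real.sqrt 3 - 1) * ((l1 ^ 2 + l2 ^ 2 - 1) / 2)
      + (1 - (2 / Real.sqrt 3 - 1)) * (((l1 - 1) ^ 2 + (l2 - 1) ^ 2) / 4)
      ≥ 7 / 2 - 2 * Real.sqrt 3 :=
  stmt_0_general l1 l2
end

section
/- For α ∈ [0,1], define G(α) = inf over pairs (λ₁, λ₂) ∈ [0,2] × [0,2] of α·(λ₁² + λ₂² − 1)/2 + (1 − α)·((λ₁ − 1)² + (λ₂ − 1)²)/4. Then the supremum of G(α) over α ∈ [0,1] equals 7/2 − 2√3, and it is attained at α = 2/√3 − 1, i.e. G(2/√3 − 1) = 7/2 − 2√3. -/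
/-! The objective separates into two copies of a one-variable quadratic with leading coefficient
`(1 + α) / 4`, minimized at `λ = (1 - α) / (1 + α) ∈ [0, 2]`; this gives
`G α = α (1 - 3α) / (2 (1 + α))`. Its maximum on `[0, 1]` follows from
`2 (1 + α) (7/2 - 2√3 - G α) = (3α + 3 - 2√3)² / 3`. -/

open Set

noncomputable section

def interpolatedWeight (α : ℝ) (p : ℝ × ℝ) : ℝ :=
  α * ((p.1 ^ 2 + p.2 ^ 2 - 1) / 2) + (1 - α) * (((p.1 - 1) ^ 2 + (p.2 - 1) ^ 2) / 4)

def interpolatedWeightMin (α : ℝ) : ℝ :=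
  α * (1 - 3 * α) / (2 * (1 + α))

lemma interpolatedWeight_sub_min {α : ℝ} (hα : 1 + α ≠ 0) (p : ℝ × ℝ) :
    interpolatedWeight α p - interpolatedWeightMin α =
      (1 + α) / 4 * ((p.1 - (1 - α) / (1 + α)) ^ 2 + (p.2 - (1 - α) / (1 + α)) ^ 2) := by
  unfold interpolatedWeight interpolatedWeightMin
  field_simp
  ring

lemma isLeast_interpolatedWeight {α : ℝ} (h₀ : -(1 / 3) ≤ α) (h₁ : α ≤ 1) :
    IsLeast (interpolatedWeight α '' (Icc 0 2 ×ˢ Icc 0 2)) (interpolatedWeightMin α) := by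
  have hpos : 0 < 1 + α := by linarith
  have hc : (1 - α) / (1 + α) ∈ Icc (0 : ℝ) 2 :=
    ⟨div_nonneg (by linarith) hpos.le, by rw [div_le_iff₀ hpos]; linarith⟩
  refine ⟨⟨((1 - α) / (1 + α), (1 - α) / (1 + α)), ⟨hc, hc⟩, ?_⟩, ?_⟩
  · linarith [interpolatedWeight_sub_min hpos.ne' ((1 - α) / (1 + α), (1 - α) / (1 + α))]
  · rintro _ ⟨p, -, rfl⟩
    have hsq := interpolatedWeight_sub_min hpos.ne' p
    have hnonneg : 0 ≤ (1 + α) / 4 * ((p.1 - (1 - α) / (1 + α)) ^ 2 + (p.2 - (1 - α) / (1 + α)) ^ 2) := by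
      positivity
    linarith

lemma interpolatedWeightMin_le {α : ℝ} (hα : -1 < α) :
    interpolatedWeightMin α ≤ 7 / 2 - 2 * √3 := by
  have hs : √3 ^ 2 = 3 := Real.sq_sqrt (by norm_num)
  have hpos : 0 < 2 * (1 + α) := by linarith
  rw [interpolatedWeightMin, div_le_iff₀ hpos]
  nlinarith [sq_nonneg (3 * α + 3 - 2 * √3)]

lemma interpolatedWeightMin_two_div_sqrt_three_sub_one :
    interpolatedWeightMin (2 / √3 - 1) = 7 / 2 - 2 * √3 := by
  have hs : √3 ^ 2 = 3 := Real.sq_sqrt (by norm_num)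
  have hs0 : √3 ≠ 0 := by positivity
  rw [interpolatedWeightMin]
  field_simp
  nlinarith [hs]

lemma two_div_sqrt_three_sub_one_mem_Icc : 2 / √3 - 1 ∈ Icc (0 : ℝ) 1 := by
  have hs : √3 ^ 2 = 3 := Real.sq_sqrt (by norm_num)
  have hs0 : 0 < √3 := by positivity
  constructor
  · rw [sub_nonneg, le_div_iff₀ hs0]; nlinarith
  · rw [sub_le_iff_le_add, div_le_iff₀ hs0]; nlinarith

end

/-- The max–min optimization of Section 6.2: with
`G(α) = inf_{(λ₁,λ₂) ∈ [0,2]²} (α(λ₁²+λ₂²−1)/2 + (1−α)((λ₁−1)²+(λ₂−1)²)/4)`,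
the supremum of `G` over `[0,1]` equals `7/2 − 2√3`, attained at `α = 2/√3 − 1`. -/
theorem stmt_1 :
    let G : ℝ → ℝ := fun α =>
      sInf ((fun p : ℝ × ℝ =>
        α * ((p.1 ^ 2 + p.2 ^ 2 - 1) / 2) + (1 - α) * (((p.1 - 1) ^ 2 + (p.2 - 1) ^ 2) / 4)) ''
          (Set.Icc (0 : ℝ) 2 ×ˢ Set.Icc (0 : ℝ) 2))
    sSup (G '' Set.Icc (0 : ℝ) 1) = 7 / 2 - 2 * Real.sqrt 3 ∧
      G (2 / Real.sqrt 3 - 1) = 7 / 2 - 2 * Real.sqrt 3 := by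
  intro G
  have hG : ∀ α ∈ Icc (0 : ℝ) 1, G α = interpolatedWeightMin α := fun α hα =>
    (isLeast_interpolatedWeight (by linarith [hα.1]) hα.2).csInf_eq
  have hα₀ := two_div_sqrt_three_sub_one_mem_Icc
  have hGα₀ : G (2 / √3 - 1) = 7 / 2 - 2 * √3 := by
    rw [hG _ hα₀, interpolatedWeightMin_two_div_sqrt_three_sub_one]
  refine ⟨IsGreatest.csSup_eq ⟨⟨_, hα₀, hGα₀⟩, ?_⟩, hGα₀⟩
  rintro _ ⟨α, hα, rfl⟩
  rw [hG α hα]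
  exact interpolatedWeightMin_le (by linarith [hα.1])
end

section
/- Define φ : ℝ → ℝ by φ(λ) = λ² − 1 − (1/2)·|λ² − 1| + (1/4)·(1 − (λ² − 1)²). For ξ ∈ [0,1], let Φ(ξ) = inf over λ ∈ [0,2] of ((ξ/2)·(λ − 1)² + (1 − ξ)·φ(λ)). Then the supremum of Φ(ξ) over ξ ∈ [0,1] lies strictly between 0.0034 and 0.0035. -/
/-!
Upper bound: for every `ξ`, `Φ(ξ)` is at most the value of the objective at the single point
`λ₀ = 0.91645`, which is a convex combination of `(λ₀ − 1)²/2` and `φ(λ₀)`; both are below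
`0.003491`. Lower bound: at `ξ = 0.972` the objective is a piecewise quartic in `λ` that stays
above `0.00348` on `[0, 2]` (its minimum sits near `λ ≈ 0.9164`), so `Φ(0.972) ≥ 0.00348`.
-/

namespace QUEExponent

open Set

noncomputable section

def phi (l : ℝ) : ℝ :=
  l ^ 2 - 1 - (1 / 2) * |l ^ 2 - 1| + (1 / 4) * (1 - (l ^ 2 - 1) ^ 2)

def objective (ξ l : ℝ) : ℝ :=
  (ξ / 2) * (l - 1) ^ 2 + (1 - ξ) * phi l

def Phi (ξ : ℝ) : ℝ :=
  sInf (objective ξ '' Icc 0 2)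

end

lemma phi_of_le_one {l : ℝ} (h : l ^ 2 ≤ 1) :
    phi l = 3 / 2 * (l ^ 2 - 1) + (1 / 4) * (1 - (l ^ 2 - 1) ^ 2) := by
  rw [phi, abs_of_nonpos (by linarith)]
  ring

lemma phi_of_one_le {l : ℝ} (h : 1 ≤ l ^ 2) :
    phi l = 1 / 2 * (l ^ 2 - 1) + (1 / 4) * (1 - (l ^ 2 - 1) ^ 2) := by
  rw [phi, abs_of_nonneg (by linarith)]
  ring

lemma neg_three_halves_le_phi {l : ℝ} (hl : l ∈ Icc (0 : ℝ) 2) : -3 / 2 ≤ phi l := by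
  obtain ⟨h0, h2⟩ := hl
  rcases le_total (l ^ 2) 1 with h | h
  · rw [phi_of_le_one h]
    nlinarith [sq_nonneg l]
  · rw [phi_of_one_le h]
    nlinarith [mul_nonneg (sub_nonneg.2 h) (by nlinarith : (0 : ℝ) ≤ 4 - l ^ 2)]

lemma bddBelow_objective {ξ : ℝ} (hξ : ξ ∈ Icc (0 : ℝ) 1) :
    BddBelow (objective ξ '' Icc 0 2) := by
  refine ⟨-3 / 2, ?_⟩
  rintro _ ⟨l, hl, rfl⟩
  have hφ := mul_le_mul_of_nonneg_left (neg_three_halves_le_phi hl) (sub_nonneg.2 hξ.2)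
  have hsq := mul_nonneg (div_nonneg hξ.1 zero_le_two) (sq_nonneg (l - 1))
  unfold objective
  linarith [hξ.1]

lemma Phi_le_objective {ξ l : ℝ} (hξ : ξ ∈ Icc (0 : ℝ) 1) (hl : l ∈ Icc (0 : ℝ) 2) :
    Phi ξ ≤ objective ξ l :=
  csInf_le (bddBelow_objective hξ) (mem_image_of_mem _ hl)

lemma objective_le_max {ξ : ℝ} (hξ : ξ ∈ Icc (0 : ℝ) 1) (l : ℝ) :
    objective ξ l ≤ max ((l - 1) ^ 2 / 2) (phi l) := by
  have h₁ := mul_le_mul_of_nonneg_left (le_max_left ((l - 1) ^ 2 / 2) (phi l)) hξ.1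
  have h₂ := mul_le_mul_of_nonneg_left (le_max_right ((l - 1) ^ 2 / 2) (phi l))
    (sub_nonneg.2 hξ.2)
  unfold objective
  linarith

lemma Phi_le {ξ : ℝ} (hξ : ξ ∈ Icc (0 : ℝ) 1) : Phi ξ ≤ 0.003491 := by
  have hl₀ : (0.91645 : ℝ) ∈ Icc (0 : ℝ) 2 := by norm_num
  have hφ : phi 0.91645 ≤ 0.003491 := by
    rw [phi_of_le_one (by norm_num)]
    norm_num
  calc Phi ξ ≤ objective ξ 0.91645 := Phi_le_objective hξ hl₀
    _ ≤ max ((0.91645 - 1) ^ 2 / 2) (phi 0.91645) := objective_le_max hξ _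
    _ ≤ 0.003491 := max_le (by norm_num) hφ

lemma objective_ge_of_le_one {l : ℝ} (h0 : 0 ≤ l) (h1 : l ≤ 1) :
    0.00348 ≤ objective 0.972 l := by
  rw [objective, phi_of_le_one (by nlinarith)]
  nlinarith [sq_nonneg ((l - 0.91645) * (l + 1)), mul_nonneg h0 (sub_nonneg.2 h1)]

lemma objective_ge_of_one_le {l : ℝ} (h1 : 1 ≤ l) (h2 : l ≤ 2) :
    0.00348 ≤ objective 0.972 l := by
  rw [objective, phi_of_one_le (by nlinarith)]
  nlinarith [mul_nonneg (sub_nonneg.2 h1) (sub_nonneg.2 h2)]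

lemma le_Phi : 0.00348 ≤ Phi 0.972 := by
  refine le_csInf ((nonempty_Icc.2 (by norm_num)).image _) ?_
  rintro _ ⟨l, ⟨h0, h2⟩, rfl⟩
  rcases le_total l 1 with h1 | h1
  · exact objective_ge_of_le_one h0 h1
  · exact objective_ge_of_one_le h1 h2

lemma sSup_Phi_mem_Icc :
    sSup (Phi '' Icc 0 1) ∈ Icc (0.00348 : ℝ) 0.003491 := by
  have hbdd : ∀ y ∈ Phi '' Icc 0 1, y ≤ 0.003491 := by
    rintro _ ⟨ξ, hξ, rfl⟩
    exact Phi_le hξ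
  refine ⟨le_csSup_of_le ⟨_, hbdd⟩ (mem_image_of_mem _ ?_) le_Phi, csSup_le ?_ hbdd⟩
  · norm_num
  · exact (nonempty_Icc.2 zero_le_one).image _

end QUEExponent

/-- The corrected exponent of the Appendix: with
`φ(λ) = λ² − 1 − |λ² − 1|/2 + (1 − (λ² − 1)²)/4` and
`Φ(ξ) = inf_{λ ∈ [0,2]} ((ξ/2)(λ−1)² + (1−ξ)φ(λ))`, the supremum of `Φ` over `[0,1]` lies
strictly between `0.0034` and `0.0035`. -/
theorem stmt_3 :
    let φ : ℝ → ℝ := fun l =>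
      l ^ 2 - 1 - (1 / 2) * |l ^ 2 - 1| + (1 / 4) * (1 - (l ^ 2 - 1) ^ 2)
    let Φ : ℝ → ℝ := fun ξ =>
      sInf ((fun l : ℝ => (ξ / 2) * (l - 1) ^ 2 + (1 - ξ) * φ l) '' Set.Icc (0 : ℝ) 2)
    0.0034 < sSup (Φ '' Set.Icc (0 : ℝ) 1) ∧ sSup (Φ '' Set.Icc (0 : ℝ) 1) < 0.0035 := by
  intro φ Φ
  change 0.0034 < sSup (QUEExponent.Phi '' Set.Icc 0 1) ∧
    sSup (QUEExponent.Phi '' Set.Icc 0 1) < 0.0035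
  obtain ⟨hlow, hup⟩ := QUEExponent.sSup_Phi_mem_Icc
  constructor <;> linarith
end

section
/- Let α and β be nonzero complex numbers. In the ring ℂ[[X]] of formal power series over ℂ, the power series U = (1 − βX)(1 − β⁻¹X) and D = 1 + (β + β⁻¹)X − (α² + 1 + α⁻²)X² are units (they have constant term 1), and the power series H = V · U⁻¹ · D⁻¹, where V = ∏_{ℓ ∈ {−1,0,1}} (1 − α^{2ℓ}X²)(1 − β^{2ℓ}X²), satisfies: the coefficient of X⁰ in H is 1, the coefficients of X¹ and X² in H are 0, the coefficient of X³ in H is −(α + α⁻¹)²(β + β⁻¹), and the coefficient of X⁴ in H is (α + α⁻¹)²((β + β⁻¹)² + 1) − 2. -/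
open PowerSeries

lemma expandP (b1 b2 a : ℂ) :
    (1 - C b1 * X) * (1 - C b2 * X) * (1 + C (b1 + b2) * X - C a * X ^ 2) =
      1 + C (b1 * b2 - a - (b1 + b2) ^ 2) * X ^ 2
        + C ((b1 + b2) * (a + b1 * b2)) * X ^ 3 - C (a * (b1 * b2)) * X ^ 4 := by
  simp only [map_add, map_mul, map_sub, map_one, map_pow]
  ring

lemma expandV (c1 c2 d1 d2 : ℂ) :
    (1 - C c2 * X ^ 2) * (1 - C d2 * X ^ 2) *
      ((1 - X ^ 2) * (1 - X ^ 2) * ((1 - C c1 * X ^ 2) * (1 - C d1 * X ^ 2))) =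
      1 - C (c1 + c2 + d1 + d2 + 2) * X ^ 2
        + C (c1 * c2 + d1 * d2 + (c1 + c2) * (d1 + d2)
            + 2 * (c1 + c2) + 2 * (d1 + d2) + 1) * X ^ 4
        - C (c1 * c2 * (d1 + d2) + 2 * (c1 * c2) + d1 * d2 * (c1 + c2) + 2 * (d1 * d2)
            + 2 * (c1 + c2) * (d1 + d2) + (c1 + c2) + (d1 + d2)) * X ^ 6
        + C (c1 * c2 * (d1 * d2) + 2 * (c1 * c2) * (d1 + d2) + 2 * (d1 * d2) * (c1 + c2)
            + c1 * c2 + d1 * d2 + (c1 + c2) * (d1 + d2)) * X ^ 8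
        - C (d1 * d2 * (c1 + c2) + c1 * c2 * (d1 + d2) + 2 * (c1 * c2) * (d1 * d2)) * X ^ 10
        + C (c1 * c2 * (d1 * d2)) * X ^ 12 := by
  simp only [map_add, map_mul, map_sub, map_one, map_pow, map_ofNat]
  ring

set_option maxHeartbeats 1000000 in
/-- Formal power-series computation behind the correction factor `H_p(s)` of Theorem A.1:
with `U = (1−βX)(1−β⁻¹X)`, `D = 1+(β+β⁻¹)X−(α²+1+α⁻²)X²`,
`V = ∏_{ℓ∈{−1,0,1}} (1−α^{2ℓ}X²)(1−β^{2ℓ}X²)` and `H = V·U⁻¹·D⁻¹`, the series `U` and `D`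
are units with constant term `1`, and the coefficients of `X⁰,…,X⁴` in `H` are
`1, 0, 0, −(α+α⁻¹)²(β+β⁻¹), (α+α⁻¹)²((β+β⁻¹)²+1)−2`. -/
theorem stmt_5 (α β : ℂ) (hα : α ≠ 0) (hβ : β ≠ 0) :
    let U : PowerSeries ℂ := (1 - C β * X) * (1 - C β⁻¹ * X)
    let D : PowerSeries ℂ := 1 + C (β + β⁻¹) * X - C (α ^ 2 + 1 + (α⁻¹) ^ 2) * X ^ 2
    let V : PowerSeries ℂ := ∏ l ∈ ({-1, 0, 1} : Finset ℤ),
      ((1 - C (α ^ (2 * l)) * X ^ 2) * (1 - C (β ^ (2 * l)) * X ^ 2))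
    let H : PowerSeries ℂ := V * U⁻¹ * D⁻¹
    IsUnit U ∧ IsUnit D ∧ constantCoeff U = 1 ∧ constantCoeff D = 1 ∧
      coeff 0 H = 1 ∧ coeff 1 H = 0 ∧ coeff 2 H = 0 ∧
      coeff 3 H = -((α + α⁻¹) ^ 2 * (β + β⁻¹)) ∧
      coeff 4 H = (α + α⁻¹) ^ 2 * ((β + β⁻¹) ^ 2 + 1) - 2 := by
  intro U D V H
  set a : ℂ := α ^ 2 + 1 + (α⁻¹) ^ 2 with ha
  have hU0 : constantCoeff U = 1 := by simp [U]
  have hD0 : constantCoeff D = 1 := by simp [D]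
  have hUu : IsUnit U := isUnit_iff_constantCoeff.mpr (by rw [hU0]; exact isUnit_one)
  have hDu : IsUnit D := isUnit_iff_constantCoeff.mpr (by rw [hD0]; exact isUnit_one)
  have key : U * D * H = V := by
    show U * D * (V * U⁻¹ * D⁻¹) = V
    rw [show U * D * (V * U⁻¹ * D⁻¹) = V * (U * U⁻¹) * (D * D⁻¹) by ring,
      PowerSeries.mul_inv_cancel U (by rw [hU0]; norm_num),
      PowerSeries.mul_inv_cancel D (by rw [hD0]; norm_num), mul_one, mul_one]
  have ze : ∀ x : ℂ, x ^ ((2:ℤ) * (-1)) = x⁻¹ ^ 2 := fun x => by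
    norm_num [zpow_neg, inv_pow]
  have z0 : ∀ x : ℂ, x ^ ((2:ℤ) * 0) = 1 := fun x => by norm_num
  have z1 : ∀ x : ℂ, x ^ ((2:ℤ) * 1) = x ^ 2 := fun x => by norm_num
  have hVeq : V = (1 - C (α⁻¹ ^ 2) * X ^ 2) * (1 - C (β⁻¹ ^ 2) * X ^ 2) *
      ((1 - X ^ 2) * (1 - X ^ 2) * ((1 - C (α ^ 2) * X ^ 2) * (1 - C (β ^ 2) * X ^ 2))) := by
    show Finset.prod _ _ = _
    rw [show ({-1, 0, 1} : Finset ℤ) = insert (-1) (insert 0 {1}) from rfl,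
      Finset.prod_insert (by decide), Finset.prod_insert (by decide), Finset.prod_singleton,
      ze α, ze β, z0 α, z0 β, z1 α, z1 β]
    simp only [map_one]
    ring
  rw [expandV (α ^ 2) (α⁻¹ ^ 2) (β ^ 2) (β⁻¹ ^ 2)] at hVeq
  have hPeq : U * D = 1 + C (β * β⁻¹ - a - (β + β⁻¹) ^ 2) * X ^ 2
      + C ((β + β⁻¹) * (a + β * β⁻¹)) * X ^ 3 - C (a * (β * β⁻¹)) * X ^ 4 :=
    expandP β β⁻¹ a
  set p2 : ℂ := β * β⁻¹ - a - (β + β⁻¹) ^ 2 with hp2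
  set p3 : ℂ := (β + β⁻¹) * (a + β * β⁻¹) with hp3
  set p4 : ℂ := a * (β * β⁻¹) with hp4
  have key3 : H + C p2 * (H * X ^ 2) + C p3 * (H * X ^ 3) - C p4 * (H * X ^ 4) = V := by
    rw [← key, hPeq]; ring
  rw [hVeq] at key3
  have e0 := congrArg (coeff 0) key3
  have e1 := congrArg (coeff 1) key3
  have e2 := congrArg (coeff 2) key3
  have e3 := congrArg (coeff 3) key3
  have e4 := congrArg (coeff 4) key3
  simp only [map_add, map_sub, coeff_C_mul, coeff_mul_X_pow', coeff_one, coeff_X_pow] at e0 e1 e2 e3 e4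
  norm_num [← map_pow, coeff_C] at e0 e1 e2 e3 e4
  simp only [← inv_pow] at e2 e3 e4
  rw [e0, mul_one] at e2 e3 e4
  rw [e1, mul_zero] at e3 e4
  have ha' : α * α⁻¹ = 1 := mul_inv_cancel₀ hα
  have hb' : β * β⁻¹ = 1 := mul_inv_cancel₀ hβ
  have hc2 : coeff 2 H = 0 := by linear_combination e2 + hb'
  refine ⟨hUu, hDu, hU0, hD0, by rw [coeff_zero_eq_constantCoeff]; exact e0, e1, hc2, ?_, ?_⟩
  · linear_combination e3 - (β + β⁻¹) * hb' + 2*(β + β⁻¹) * ha'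
  · rw [hc2, mul_zero] at e4
    linear_combination e4 + (α*α⁻¹ - 2*(β^2 + β⁻¹^2) - 5) * ha'
      + (β*β⁻¹ + 2 - (α^2 + α⁻¹^2) - 4*(α*α⁻¹)) * hb'
end

section
/- Let x be a real number with x ≥ 19, let s be a complex number with Re(s) ≥ 2/5, and let a, b be complex numbers with |a| ≤ x^{7/64} + x^{−7/64} and |b| ≤ 3. Then |1 + a·x^{−s} − b·x^{−2s}| > 0.06, where x^{−s} denotes exp(−s·log x) with the real logarithm. -/
lemma h1' : (19:ℝ) ^ ((-(93:ℝ))/320) ≤ 0.427 := by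
  apply le_of_pow_le_pow_left₀ (n := 320) (by norm_num) (by norm_num)
  have : ((19:ℝ) ^ ((-(93:ℝ))/320)) ^ (320:ℕ) = ((19:ℝ)^(93:ℕ))⁻¹ := by
    rw [← Real.rpow_natCast ((19:ℝ)^((-(93:ℝ))/320)) 320, ← Real.rpow_mul (by norm_num)]
    norm_num
  rw [this, inv_le_iff_one_le_mul₀ (by positivity)]
  norm_num
  rw [div_pow, div_mul_eq_mul_div, one_le_div (by positivity)]
  exact_mod_cast (by decide : (1000:ℕ)^320 ≤ 427^320 * 19^93)

lemma h2' : (19:ℝ) ^ ((-(163:ℝ))/320) ≤ 0.2245 := by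
  apply le_of_pow_le_pow_left₀ (n := 320) (by norm_num) (by norm_num)
  have : ((19:ℝ) ^ ((-(163:ℝ))/320)) ^ (320:ℕ) = ((19:ℝ)^(163:ℕ))⁻¹ := by
    rw [← Real.rpow_natCast ((19:ℝ)^((-(163:ℝ))/320)) 320, ← Real.rpow_mul (by norm_num)]
    norm_num
  rw [this, inv_le_iff_one_le_mul₀ (by positivity)]
  norm_num
  rw [div_pow, div_mul_eq_mul_div, one_le_div (by positivity)]
  exact_mod_cast (by decide : (2000:ℕ)^320 ≤ 449^320 * 19^163)

lemma h3' : (19:ℝ) ^ ((-(4:ℝ))/5) ≤ 0.096 := by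
  apply le_of_pow_le_pow_left₀ (n := 5) (by norm_num) (by norm_num)
  have : ((19:ℝ) ^ ((-(4:ℝ))/5)) ^ (5:ℕ) = ((19:ℝ)^(4:ℕ))⁻¹ := by
    rw [← Real.rpow_natCast ((19:ℝ)^((-(4:ℝ))/5)) 5, ← Real.rpow_mul (by norm_num)]
    norm_num
  rw [this, inv_le_iff_one_le_mul₀ (by positivity)]
  norm_num

/-- Numerical non-vanishing from Theorem A.1: for real `x ≥ 19`, `Re(s) ≥ 2/5`,
`|a| ≤ x^{7/64} + x^{−7/64}`, and `|b| ≤ 3`, one has `|1 + a·x^{−s} − b·x^{−2s}| > 0.06`,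
where `x^{−s} = exp(−s·log x)`. -/
theorem stmt_6 (x : ℝ) (hx : 19 ≤ x) (s : ℂ) (hs : 2 / 5 ≤ s.re) (a b : ℂ)
    (ha : ‖a‖ ≤ x ^ ((7 : ℝ) / 64) + x ^ (-(7 : ℝ) / 64)) (hb : ‖b‖ ≤ 3) :
    0.06 < ‖1 + a * Complex.exp (-s * (Real.log x : ℂ))
      - b * Complex.exp (-(2 * s) * (Real.log x : ℂ))‖ := by
  have hx0 : (0:ℝ) < x := by linarith
  have hx1 : (1:ℝ) ≤ x := by linarith
  set L := Real.log x with hLdef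
  have hL0 : 0 ≤ L := Real.log_nonneg hx1
  -- norms of exponentials
  have hU : ‖Complex.exp (-s * (L:ℂ))‖ = x ^ (-s.re) := by
    rw [Complex.norm_exp, Real.rpow_def_of_pos hx0]
    congr 1
    simp [Complex.mul_re]
    ring
  have hV : ‖Complex.exp (-(2*s) * (L:ℂ))‖ = x ^ (-(2*s.re)) := by
    rw [Complex.norm_exp, Real.rpow_def_of_pos hx0]
    congr 1
    simp [Complex.mul_re]
    ring
  have hUb : ‖Complex.exp (-s * (L:ℂ))‖ ≤ x ^ (-(2:ℝ)/5) := by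
    rw [hU]; exact Real.rpow_le_rpow_of_exponent_le hx1 (by linarith)
  have hVb : ‖Complex.exp (-(2*s) * (L:ℂ))‖ ≤ x ^ (-(4:ℝ)/5) := by
    rw [hV]; exact Real.rpow_le_rpow_of_exponent_le hx1 (by linarith)
  have hanorm : (0:ℝ) ≤ ‖a‖ := norm_nonneg a
  have hbnorm : (0:ℝ) ≤ ‖b‖ := norm_nonneg b
  have hUpos : (0:ℝ) ≤ ‖Complex.exp (-s * (L:ℂ))‖ := norm_nonneg _
  have hVpos : (0:ℝ) ≤ ‖Complex.exp (-(2*s) * (L:ℂ))‖ := norm_nonneg _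
  -- bound ‖a U‖
  have key1 : ‖a * Complex.exp (-s * (L:ℂ))‖ ≤ x ^ ((-(93:ℝ))/320) + x ^ ((-(163:ℝ))/320) := by
    rw [norm_mul]
    calc ‖a‖ * ‖Complex.exp (-s * (L:ℂ))‖
        ≤ (x ^ ((7:ℝ)/64) + x ^ (-(7:ℝ)/64)) * (x ^ (-(2:ℝ)/5)) :=
          mul_le_mul ha hUb hUpos (by positivity)
      _ = x ^ ((-(93:ℝ))/320) + x ^ ((-(163:ℝ))/320) := by
          rw [add_mul, ← Real.rpow_add hx0, ← Real.rpow_add hx0]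
          norm_num
  have key2 : ‖b * Complex.exp (-(2*s) * (L:ℂ))‖ ≤ 3 * x ^ ((-(4:ℝ))/5) := by
    rw [norm_mul]
    calc ‖b‖ * ‖Complex.exp (-(2*s) * (L:ℂ))‖ ≤ 3 * (x ^ (-(4:ℝ)/5)) :=
      mul_le_mul hb hVb hVpos (by norm_num)
      _ = 3 * x ^ ((-(4:ℝ))/5) := by norm_num
  -- compare with base 19
  have c1 : x ^ ((-(93:ℝ))/320) ≤ (0.427:ℝ) :=
    le_trans (Real.rpow_le_rpow_of_nonpos (by norm_num) hx (by norm_num)) h1'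
  have c2 : x ^ ((-(163:ℝ))/320) ≤ (0.2245:ℝ) :=
    le_trans (Real.rpow_le_rpow_of_nonpos (by norm_num) hx (by norm_num)) h2'
  have c3 : x ^ ((-(4:ℝ))/5) ≤ (0.096:ℝ) :=
    le_trans (Real.rpow_le_rpow_of_nonpos (by norm_num) hx (by norm_num)) h3'
  -- triangle inequality
  set u := a * Complex.exp (-s * (L:ℂ)) with hu
  set v := b * Complex.exp (-(2*s) * (L:ℂ)) with hv
  have tri : (1:ℝ) - ‖u‖ - ‖v‖ ≤ ‖1 + u - v‖ := by
    have h := norm_sub_norm_le (1:ℂ) (v - u)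
    have e : (1:ℂ) - (v - u) = 1 + u - v := by ring
    rw [e] at h
    have h2 : ‖v - u‖ ≤ ‖v‖ + ‖u‖ := norm_sub_le _ _
    simp only [norm_one] at h
    linarith
  have : (0.06:ℝ) < 1 - ‖u‖ - ‖v‖ := by
    have : ‖u‖ ≤ 0.427 + 0.2245 := le_trans key1 (by linarith)
    have : ‖v‖ ≤ 3 * 0.096 := le_trans key2 (by nlinarith)
    linarith [key1, key2, c1, c2, c3]
  linarith
end
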